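/- arXiv:2506.20498 — 6 statements merged into one kernel-verified Lean document; each statement's English description precedes it below -/
import Mathlib

section
/- For every fixed real β ≥ 0 and natural number n, as σ → ∞ one has ∫_β^σ x^n √(σ² − x²) dx = (1/2) B((n+1)/2, 3/2) σ^{n+2} − (β^{n+1}/(n+1)) σ + O(σ^{−1}), where B is the Euler Beta function. -/
open MeasureTheory Real Filter Asymptotics

/-- The Euler Beta function `B(x, y) = ∫ t in 0..1, t^(x-1) * (1-t)^(y-1)`. -/
noncomputable def eulerBeta (x y : ℝ) : ℝ :=
  ∫ t in (0:ℝ)..1, t ^ (x - 1) * (1 - t) ^ (y - 1)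

/-!
Substituting `x = σ t` gives `∫₀^σ xⁿ √(σ² - x²) dx = σ^(n+2) ∫₀¹ tⁿ √(1 - t²) dt`, and `u = t²` turns
the last integral into `B((n+1)/2, 3/2) / 2`. Hence the difference between the two sides of the
expansion is `∫₀^β xⁿ (σ - √(σ² - x²)) dx`, and `0 ≤ σ - √(σ² - x²) ≤ x²/σ` bounds it by `β^(n+3)/σ`.
-/

lemma sq_image_Ioo_zero_one : (fun t : ℝ => t ^ 2) '' Set.Ioo 0 1 = Set.Ioo 0 1 := by
  ext u
  constructor
  · rintro ⟨t, ⟨ht0, ht1⟩, rfl⟩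
    exact ⟨by positivity, by nlinarith⟩
  · rintro ⟨hu0, hu1⟩
    refine ⟨√u, ⟨sqrt_pos.2 hu0, ?_⟩, sq_sqrt hu0.le⟩
    rwa [sqrt_lt' one_pos, one_pow]

lemma eulerBeta_eq_two_mul_integral_comp_sq (x y : ℝ) :
    eulerBeta x y = 2 * ∫ t in (0:ℝ)..1, t ^ (2 * x - 1) * (1 - t ^ 2) ^ (y - 1) := by
  have hinj : Set.InjOn (fun t : ℝ => t ^ 2) (Set.Ioo 0 1) := fun a ha b hb h =>
    (pow_left_inj₀ ha.1.le hb.1.le two_ne_zero).1 h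
  rw [eulerBeta, intervalIntegral.integral_of_le zero_le_one, integral_Ioc_eq_integral_Ioo,
    ← sq_image_Ioo_zero_one, integral_image_eq_integral_abs_deriv_smul measurableSet_Ioo
      (fun t _ => (hasDerivAt_pow 2 t).hasDerivWithinAt) hinj,
    intervalIntegral.integral_of_le zero_le_one, integral_Ioc_eq_integral_Ioo,
    ← integral_const_mul]
  refine setIntegral_congr_fun measurableSet_Ioo fun t ⟨ht0, _⟩ => ?_
  have hpow : t * (t ^ 2) ^ (x - 1) = t ^ (2 * x - 1) := by
    rw [← rpow_natCast_mul ht0.le, show 2 * x - 1 = 1 + (2 : ℕ) * (x - 1) by push_cast; ring,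
      rpow_add ht0, rpow_one]
  simp only [smul_eq_mul, Nat.cast_ofNat, Nat.add_one_sub_one, pow_one]
  rw [abs_of_pos (by positivity : (0:ℝ) < 2 * t), ← hpow]
  ring

lemma eulerBeta_half_succ_three_halves (n : ℕ) :
    eulerBeta (((n : ℝ) + 1) / 2) (3 / 2) = 2 * ∫ t in (0:ℝ)..1, t ^ n * √(1 - t ^ 2) := by
  rw [eulerBeta_eq_two_mul_integral_comp_sq]
  congr 2
  funext t
  rw [show 2 * (((n : ℝ) + 1) / 2) - 1 = n by ring, rpow_natCast, sqrt_eq_rpow]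
  norm_num

lemma integral_pow_mul_sqrt_sq_sub_sq (n : ℕ) {σ : ℝ} (hσ : 0 ≤ σ) :
    ∫ x in (0:ℝ)..σ, x ^ n * √(σ ^ 2 - x ^ 2) =
      σ ^ (n + 2) * ∫ t in (0:ℝ)..1, t ^ n * √(1 - t ^ 2) := by
  have hscale : (fun t : ℝ => (σ * t) ^ n * √(σ ^ 2 - (σ * t) ^ 2)) =
      fun t => σ ^ (n + 1) * (t ^ n * √(1 - t ^ 2)) := by
    funext t
    rw [show σ ^ 2 - (σ * t) ^ 2 = σ ^ 2 * (1 - t ^ 2) by ring, sqrt_mul (sq_nonneg σ),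
      sqrt_sq hσ, mul_pow]
    ring
  have h := intervalIntegral.smul_integral_comp_mul_left (a := 0) (b := 1)
    (fun x => x ^ n * √(σ ^ 2 - x ^ 2)) σ
  simp only [mul_zero, mul_one, smul_eq_mul] at h
  rw [← h, hscale, intervalIntegral.integral_const_mul]
  ring

lemma sqrt_sq_sub_sq_le (x : ℝ) {σ : ℝ} (hσ : 0 ≤ σ) : √(σ ^ 2 - x ^ 2) ≤ σ :=
  (sqrt_le_sqrt (by nlinarith)).trans (sqrt_sq hσ).le

lemma sub_sqrt_sq_sub_sq_le (x : ℝ) {σ : ℝ} (hσ : 0 < σ) : σ - √(σ ^ 2 - x ^ 2) ≤ x ^ 2 / σ := by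
  have hsσ := sqrt_sq_sub_sq_le x hσ.le
  have hss : σ ^ 2 - x ^ 2 ≤ √(σ ^ 2 - x ^ 2) ^ 2 := by
    rcases le_total 0 (σ ^ 2 - x ^ 2) with h | h
    · rw [sq_sqrt h]
    · exact h.trans (sq_nonneg _)
  rw [le_div_iff₀ hσ]
  nlinarith [mul_le_mul_of_nonneg_left hsσ (sqrt_nonneg (σ ^ 2 - x ^ 2))]

lemma integral_pow_mul_sqrt_sq_sub_sq_eq (n : ℕ) (β : ℝ) {σ : ℝ} (hσ : 0 ≤ σ) :
    ∫ x in β..σ, x ^ n * √(σ ^ 2 - x ^ 2) =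
      1 / 2 * eulerBeta (((n : ℝ) + 1) / 2) (3 / 2) * σ ^ (n + 2) -
        β ^ (n + 1) / ((n : ℝ) + 1) * σ + ∫ x in (0:ℝ)..β, x ^ n * (σ - √(σ ^ 2 - x ^ 2)) := by
  have hint (a b : ℝ) : IntervalIntegrable (fun x : ℝ => x ^ n * √(σ ^ 2 - x ^ 2)) volume a b :=
    (by fun_prop : Continuous fun x : ℝ => x ^ n * √(σ ^ 2 - x ^ 2)).intervalIntegrable a b
  have hpow : ∫ x in (0:ℝ)..β, x ^ n * σ = β ^ (n + 1) / ((n : ℝ) + 1) * σ := by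
    rw [intervalIntegral.integral_mul_const, integral_pow]
    ring
  simp only [mul_sub]
  rw [intervalIntegral.integral_sub
    ((by fun_prop : Continuous fun x : ℝ => x ^ n * σ).intervalIntegrable 0 β) (hint 0 β), hpow,
    ← intervalIntegral.integral_interval_sub_left (hint 0 σ) (hint 0 β),
    integral_pow_mul_sqrt_sq_sub_sq n hσ, eulerBeta_half_succ_three_halves]
  ring

lemma norm_integral_pow_mul_sub_sqrt_le (n : ℕ) {β σ : ℝ} (hβ : 0 ≤ β) (hσ : 0 < σ) :
    ‖∫ x in (0:ℝ)..β, x ^ n * (σ - √(σ ^ 2 - x ^ 2))‖ ≤ β ^ (n + 3) / σ := by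
  have hbound : ∀ x ∈ Set.uIoc 0 β, ‖x ^ n * (σ - √(σ ^ 2 - x ^ 2))‖ ≤ β ^ n * (β ^ 2 / σ) := by
    intro x hx
    rw [Set.uIoc_of_le hβ] at hx
    obtain ⟨hx0, hxβ⟩ := hx
    have hd0 : 0 ≤ σ - √(σ ^ 2 - x ^ 2) := sub_nonneg.2 (sqrt_sq_sub_sq_le x hσ.le)
    rw [norm_mul, norm_pow, norm_of_nonneg hx0.le, norm_of_nonneg hd0]
    exact mul_le_mul (pow_le_pow_left₀ hx0.le hxβ n)
      ((sub_sqrt_sq_sub_sq_le x hσ).trans (by gcongr)) hd0 (by positivity)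
  calc ‖∫ x in (0:ℝ)..β, x ^ n * (σ - √(σ ^ 2 - x ^ 2))‖
      ≤ β ^ n * (β ^ 2 / σ) * |β - 0| := intervalIntegral.norm_integral_le_of_norm_le_const hbound
    _ = β ^ (n + 3) / σ := by rw [sub_zero, abs_of_nonneg hβ]; ring

theorem stmt_2 (β : ℝ) (hβ : 0 ≤ β) (n : ℕ) :
    (fun σ : ℝ =>
        (∫ x in β..σ, x ^ n * Real.sqrt (σ ^ 2 - x ^ 2)) -
          ((1 / 2) * eulerBeta (((n : ℝ) + 1) / 2) (3 / 2) * σ ^ (n + 2) -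
            β ^ (n + 1) / ((n : ℝ) + 1) * σ))
      =O[atTop] fun σ : ℝ => σ⁻¹ := by
  refine isBigO_iff.2 ⟨β ^ (n + 3), ?_⟩
  filter_upwards [eventually_gt_atTop 0] with σ hσ
  rw [integral_pow_mul_sqrt_sq_sub_sq_eq n β hσ.le, add_sub_cancel_left,
    norm_inv, norm_of_nonneg hσ.le, ← div_eq_mul_inv]
  exact norm_integral_pow_mul_sub_sqrt_le n hβ hσ
end

section
/- For every real p > 0 and every real z, one has 2 ∫_0^{π/2} ∫_0^{π/2} cos^{2p−1}(θ) sin²(θ) sin(φ) (1 + z² sin²(θ) sin²(φ))^{−1/2} dθ dφ = (1/2) B(1/2, p) ∫_0^1 (1 + z² x)^{−1/2} (1 − x)^{p − 1/2} dx. -/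
open MeasureTheory Real

/-!
Substituting `u = sin² θ` and `v = sin² φ` turns the left side into a Beta-type integral
over the unit square, and `x = u v` turns the `v`-integral into `∫₀ᵘ (u - x)^(-1/2) k(x) dx`,
where `k(x) = (1 + z² x)^(-1/2)`. Exchanging the order of integration over the triangle
`0 < x < u < 1`, the inner integral `∫ₓ¹ (1 - u)^(p-1) (u - x)^(-1/2) du` is
`(1 - x)^(p - 1/2) B(1/2, p)` by the affine substitution `u = x + (1 - x) w`.
The exchanges of order are justified by domination: `|k| ≤ 1` on `[0, 1]`, and
`(1 - u)^(p-1)` is integrable because `p > 0`.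
-/

open Set Function

theorem integral_sin_rpow_mul_cos_rpow_comp_sin_sq (a b : ℝ) (k : ℝ → ℝ) :
    ∫ θ in Ioo 0 (π / 2), sin θ ^ (2 * a - 1) * cos θ ^ (2 * b - 1) * k (sin θ ^ 2) =
      (1 / 2) * ∫ u in Ioo 0 1, u ^ (a - 1) * (1 - u) ^ (b - 1) * k u := by
  have hsub := integral_Icc_deriv_smul_of_deriv_nonneg (f := fun θ => sin θ ^ 2)
    (f' := fun θ => 2 * sin θ * cos θ) (g := fun u => u ^ (a - 1) * (1 - u) ^ (b - 1) * k u)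
    (a := 0) (b := π / 2) (by fun_prop)
    (fun θ _ => by simpa [mul_assoc] using (hasDerivAt_sin θ).fun_pow 2)
    (fun θ hθ => by
      have := sin_pos_of_pos_of_lt_pi hθ.1 (by linarith [hθ.2, pi_pos])
      have := cos_pos_of_mem_Ioo ⟨by linarith [hθ.1, pi_pos], hθ.2⟩
      positivity)
    (by positivity)
  simp only [sin_zero, sin_pi_div_two, ne_eq, OfNat.ofNat_ne_zero, not_false_eq_true,
    zero_pow, one_pow, smul_eq_mul, integral_Icc_eq_integral_Ioo] at hsub
  rw [← hsub, ← integral_const_mul]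
  refine setIntegral_congr_fun measurableSet_Ioo fun θ hθ => ?_
  have hs : 0 < sin θ := sin_pos_of_pos_of_lt_pi hθ.1 (by linarith [hθ.2, pi_pos])
  have hc : 0 < cos θ := cos_pos_of_mem_Ioo ⟨by linarith [hθ.1, pi_pos], hθ.2⟩
  have hsq : ∀ {x : ℝ}, 0 < x → ∀ c : ℝ, (x ^ 2) ^ (c - 1) * x = x ^ (2 * c - 1) := by
    intro x hx c
    rw [← rpow_natCast, ← rpow_mul hx.le, ← rpow_add_one hx.ne']
    norm_num; ring_nf
  rw [← cos_sq', ← hsq hs a, ← hsq hc b]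
  ring

theorem integral_Ioo_eq_sub_mul_integral_Ioo_zero_one {a b : ℝ} (hab : a ≤ b)
    (G : ℝ → ℝ) :
    ∫ t in Ioo a b, G t = (b - a) * ∫ w in Ioo 0 1, G (a + (b - a) * w) := by
  rw [← integral_Ioc_eq_integral_Ioo, ← integral_Ioc_eq_integral_Ioo,
    ← intervalIntegral.integral_of_le hab, ← intervalIntegral.integral_of_le zero_le_one,
    ← smul_eq_mul, intervalIntegral.smul_integral_comp_add_mul]
  simp

theorem integral_Ioo_sub_rpow_mul_sub_rpow_eq_eulerBeta {a b : ℝ} (hab : a < b) (α β : ℝ) :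
    ∫ t in Ioo a b, (t - a) ^ (α - 1) * (b - t) ^ (β - 1) =
      (b - a) ^ (α + β - 1) * eulerBeta α β := by
  have hba : 0 < b - a := sub_pos.2 hab
  rw [integral_Ioo_eq_sub_mul_integral_Ioo_zero_one hab.le, eulerBeta,
    intervalIntegral.integral_of_le zero_le_one, integral_Ioc_eq_integral_Ioo,
    ← integral_const_mul, ← integral_const_mul]
  refine setIntegral_congr_fun measurableSet_Ioo fun w hw => ?_
  have h1 : b - (a + (b - a) * w) = (b - a) * (1 - w) := by ring
  rw [add_sub_cancel_left, h1, mul_rpow hba.le hw.1.le, mul_rpow hba.le (by linarith [hw.2]),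
    show α + β - 1 = 1 + (α - 1) + (β - 1) by ring, rpow_add hba, rpow_add hba, rpow_one]
  ring

theorem integral_sin_mul_comp_mul_sin_sq {u : ℝ} (hu : 0 < u) (k : ℝ → ℝ) :
    ∫ φ in Ioo 0 (π / 2), sin φ * k (u * sin φ ^ 2) =
      (1 / 2) * u ^ (-(1 / 2) : ℝ) * ∫ x in Ioo 0 u, (u - x) ^ (-(1 / 2) : ℝ) * k x := by
  have h := integral_sin_rpow_mul_cos_rpow_comp_sin_sq 1 (1 / 2) (fun v => k (u * v))
  norm_num at h
  rw [h, integral_Ioo_eq_sub_mul_integral_Ioo_zero_one hu.le, ← integral_const_mul,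
    ← integral_const_mul, ← integral_const_mul]
  refine setIntegral_congr_fun measurableSet_Ioo fun v hv => ?_
  have h1 : u - (0 + (u - 0) * v) = u * (1 - v) := by ring
  rw [h1, mul_rpow hu.le (by linarith [hv.2])]
  have h2 : u ^ (-(1 / 2) : ℝ) * (u * u ^ (-(1 / 2) : ℝ)) = 1 := by
    rw [mul_left_comm, ← rpow_add hu]; norm_num [rpow_neg_one, hu.ne']
  simp only [zero_add, sub_zero]
  linear_combination (-(1 / 2) * (1 - v) ^ (-(1 / 2) : ℝ) * k (u * v)) * h2

theorem integral_integral_swap_of_norm_le {α β E : Type*}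
    [MeasurableSpace α] [MeasurableSpace β] [NormedAddCommGroup E] [NormedSpace ℝ E]
    {μ : Measure α} {ν : Measure β} [IsFiniteMeasure μ] [SFinite ν] {f : α → β → E} {g : β → ℝ}
    (hf : AEStronglyMeasurable (uncurry f) (μ.prod ν)) (hg : Integrable g ν)
    (hfg : ∀ᵐ b ∂ν, ∀ a, ‖f a b‖ ≤ g b) :
    ∫ a, ∫ b, f a b ∂ν ∂μ = ∫ b, ∫ a, f a b ∂μ ∂ν := by
  refine integral_integral_swap (((integrable_const (1 : ℝ)).mul_prod hg).mono' hf ?_)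
  filter_upwards [Measure.quasiMeasurePreserving_snd.ae hfg] with q hq
  rw [one_mul]
  exact hq q.1

-- Points are written `(u, x)`, with the outer variable `u` first.
def openTriangle (a b : ℝ) : Set (ℝ × ℝ) := {q | a < q.2 ∧ q.2 < q.1 ∧ q.1 < b}

theorem measurableSet_openTriangle (a b : ℝ) : MeasurableSet (openTriangle a b) :=
  (measurableSet_lt measurable_const measurable_snd).inter
    ((measurableSet_lt measurable_snd measurable_fst).inter
      (measurableSet_lt measurable_fst measurable_const))

section Triangle

variable {E : Type*} [NormedAddCommGroup E] {a b : ℝ}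

theorem indicator_openTriangle_apply (F : ℝ × ℝ → E) (u x : ℝ) :
    (openTriangle a b).indicator F (u, x) =
      (Ioo a b).indicator (fun u => (Ioo a u).indicator (fun x => F (u, x)) x) u := by
  simp only [indicator_apply, openTriangle, mem_ofPred_eq, mem_Ioo]
  split_ifs <;> grind

theorem indicator_openTriangle_apply' (F : ℝ × ℝ → E) (u x : ℝ) :
    (openTriangle a b).indicator F (u, x) =
      (Ioo a b).indicator (fun x => (Ioo x b).indicator (fun u => F (u, x)) u) x := by
  simp only [indicator_apply, openTriangle, mem_ofPred_eq, mem_Ioo]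
  split_ifs <;> grind

variable [NormedSpace ℝ E]

theorem integral_indicator_openTriangle_left (F : ℝ × ℝ → E) (u : ℝ) :
    ∫ x, (openTriangle a b).indicator F (u, x) =
      (Ioo a b).indicator (fun u => ∫ x in Ioo a u, F (u, x)) u := by
  simp_rw [indicator_openTriangle_apply]
  by_cases hu : u ∈ Ioo a b
  · simp only [indicator_of_mem hu, integral_indicator measurableSet_Ioo]
  · simp [indicator_of_notMem hu]

theorem integral_indicator_openTriangle_right (F : ℝ × ℝ → E) (x : ℝ) :
    ∫ u, (openTriangle a b).indicator F (u, x) =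
      (Ioo a b).indicator (fun x => ∫ u in Ioo x b, F (u, x)) x := by
  simp_rw [indicator_openTriangle_apply']
  by_cases hx : x ∈ Ioo a b
  · simp only [indicator_of_mem hx, integral_indicator measurableSet_Ioo]
  · simp [indicator_of_notMem hx]

theorem integral_integral_swap_openTriangle {f : ℝ → ℝ → E}
    (hf : IntegrableOn (uncurry f) (openTriangle a b)) :
    ∫ u in Ioo a b, ∫ x in Ioo a u, f u x = ∫ x in Ioo a b, ∫ u in Ioo x b, f u x := by
  have hF := (integrable_indicator_iff (measurableSet_openTriangle a b)).2 hf
  rw [Measure.volume_eq_prod] at hF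
  have := integral_integral_swap
    (f := fun u x => (openTriangle a b).indicator (uncurry f) (u, x)) hF
  simpa only [integral_indicator_openTriangle_left, integral_indicator_openTriangle_right,
    integral_indicator measurableSet_Ioo, uncurry_apply_pair] using this

end Triangle

theorem integrableOn_Ioo_sub_rpow (a u : ℝ) {α : ℝ} (hα : 0 < α) :
    IntegrableOn (fun x => (u - x) ^ (α - 1)) (Ioo a u) := by
  rcases le_total u a with hua | hau
  · simp [Ioo_eq_empty_of_le hua]
  have := ((intervalIntegral.intervalIntegrable_rpow' (a := 0) (b := u - a)
    (r := α - 1) (by linarith)).comp_sub_left u).symm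
  simp only [sub_sub_cancel, sub_zero] at this
  exact (intervalIntegrable_iff_integrableOn_Ioo_of_le hau).1 this

theorem integral_Ioo_sub_rpow {a u : ℝ} (hau : a ≤ u) {α : ℝ} (hα : 0 < α) :
    ∫ x in Ioo a u, (u - x) ^ (α - 1) = (u - a) ^ α / α := by
  rw [← integral_Ioc_eq_integral_Ioo, ← intervalIntegral.integral_of_le hau,
    intervalIntegral.integral_comp_sub_left (fun x => x ^ (α - 1)),
    integral_rpow (Or.inl (by linarith))]
  simp [zero_rpow hα.ne']

theorem integrableOn_openTriangle_mul_sub_rpow {a b : ℝ} {g : ℝ → ℝ} (hgm : Measurable g)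
    (hg : IntegrableOn g (Ioo a b)) {α : ℝ} (hα : 0 < α) :
    IntegrableOn (fun q : ℝ × ℝ => g q.1 * (q.1 - q.2) ^ (α - 1)) (openTriangle a b) := by
  rw [← integrable_indicator_iff (measurableSet_openTriangle a b), Measure.volume_eq_prod]
  have hmeas : Measurable fun q : ℝ × ℝ => g q.1 * (q.1 - q.2) ^ (α - 1) := by fun_prop
  refine (integrable_prod_iff
    (hmeas.indicator (measurableSet_openTriangle a b)).aestronglyMeasurable).2 ⟨?_, ?_⟩
  · refine Filter.Eventually.of_forall fun u => ?_
    simp only [indicator_openTriangle_apply]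
    by_cases hu : u ∈ Ioo a b
    · simp only [indicator_of_mem hu]
      exact (integrable_indicator_iff measurableSet_Ioo).2
        ((integrableOn_Ioo_sub_rpow a u hα).const_mul (g u))
    · simp [indicator_of_notMem hu]
  · have hsec : ∀ u ∈ Ioo a b, ∫ x in Ioo a u, ‖g u * (u - x) ^ (α - 1)‖ =
        ‖g u‖ * ((u - a) ^ α / α) := by
      intro u hu
      rw [← integral_Ioo_sub_rpow hu.1.le hα, ← integral_const_mul]
      refine setIntegral_congr_fun measurableSet_Ioo fun x hx => ?_
      rw [norm_mul, norm_of_nonneg (rpow_nonneg (sub_nonneg.2 hx.2.le) _)]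
    simp_rw [norm_indicator_eq_indicator_norm, integral_indicator_openTriangle_left]
    rw [integrable_indicator_iff measurableSet_Ioo]
    refine (integrableOn_congr_fun (fun u hu => (hsec u hu).symm) measurableSet_Ioo).1 ?_
    refine hg.norm.mul_bdd (c := (b - a) ^ α / α)
      (by fun_prop : Measurable fun u : ℝ => (u - a) ^ α / α).aestronglyMeasurable ?_
    filter_upwards [ae_restrict_mem measurableSet_Ioo] with u hu
    rw [norm_of_nonneg (by have := hu.1.le; positivity)]
    gcongr <;> linarith [hu.1, hu.2]

theorem integral_integral_sub_rpow_mul_sub_rpow_mul_eq_eulerBeta_mul {a b α β : ℝ}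
    (hα : 0 < α) (hβ : 0 < β) {k : ℝ → ℝ} (hk : Measurable k) {C : ℝ}
    (hkC : ∀ y ∈ Icc a b, ‖k y‖ ≤ C) :
    ∫ u in Ioo a b, ∫ x in Ioo a u, (b - u) ^ (β - 1) * (u - x) ^ (α - 1) * k x =
      eulerBeta α β * ∫ x in Ioo a b, k x * (b - x) ^ (α + β - 1) := by
  have hint : IntegrableOn (uncurry fun u x => (b - u) ^ (β - 1) * (u - x) ^ (α - 1) * k x)
      (openTriangle a b) := by
    refine (integrableOn_openTriangle_mul_sub_rpow (g := fun u => C * (b - u) ^ (β - 1))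
      (by fun_prop) ((integrableOn_Ioo_sub_rpow a b hβ).const_mul C) hα).mono'
      (by fun_prop) ?_
    filter_upwards [ae_restrict_mem (measurableSet_openTriangle a b)]
      with ⟨u, x⟩ ⟨hax, hxu, hub⟩
    have hkx := hkC x ⟨hax.le, (hxu.trans hub).le⟩
    simp only [uncurry_apply_pair, norm_mul, norm_of_nonneg (rpow_nonneg (sub_nonneg.2 hub.le) _),
      norm_of_nonneg (rpow_nonneg (sub_nonneg.2 hxu.le) _)]
    calc _ ≤ (b - u) ^ (β - 1) * (u - x) ^ (α - 1) * C := by gcongr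
      _ = _ := by ring
  rw [integral_integral_swap_openTriangle hint, ← integral_const_mul]
  refine setIntegral_congr_fun measurableSet_Ioo fun x hx => ?_
  calc ∫ u in Ioo x b, (b - u) ^ (β - 1) * (u - x) ^ (α - 1) * k x
      = (∫ u in Ioo x b, (u - x) ^ (α - 1) * (b - u) ^ (β - 1)) * k x := by
        rw [← integral_mul_const]
        congr with u
        ring
    _ = _ := by
        rw [integral_Ioo_sub_rpow_mul_sub_rpow_eq_eulerBeta hx.2]
        ring

theorem two_mul_integral_integral_cos_rpow_sin_comp_eq {p : ℝ} (hp : 0 < p)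
    {k : ℝ → ℝ} (hk : Measurable k) {C : ℝ}
    (hkC : ∀ y ∈ Icc (0 : ℝ) 1, ‖k y‖ ≤ C) :
    2 * ∫ φ in Ioo 0 (π / 2), ∫ θ in Ioo 0 (π / 2),
        cos θ ^ (2 * p - 1) * sin θ ^ 2 * sin φ * k (sin θ ^ 2 * sin φ ^ 2) =
      (1 / 2) * ∫ u in Ioo 0 1, ∫ x in Ioo 0 u,
        (1 - u) ^ (p - 1) * (u - x) ^ (-(1 / 2) : ℝ) * k x := by
  set F : ℝ → ℝ → ℝ :=
    fun φ u => u ^ (3 / 2 - 1 : ℝ) * (1 - u) ^ (p - 1) * (sin φ * k (u * sin φ ^ 2))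
  have inner (φ : ℝ) : ∫ θ in Ioo 0 (π / 2),
      cos θ ^ (2 * p - 1) * sin θ ^ 2 * sin φ * k (sin θ ^ 2 * sin φ ^ 2) =
        (1 / 2) * ∫ u in Ioo 0 1, F φ u := by
    rw [← integral_sin_rpow_mul_cos_rpow_comp_sin_sq]
    congr with θ
    rw [show (2 : ℝ) * (3 / 2) - 1 = 2 by norm_num, rpow_two]
    ring
  have swap : ∫ φ in Ioo 0 (π / 2), ∫ u in Ioo 0 1, F φ u =
      ∫ u in Ioo 0 1, ∫ φ in Ioo 0 (π / 2), F φ u := by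
    refine integral_integral_swap_of_norm_le (g := fun u => C * (1 - u) ^ (p - 1))
      (by fun_prop) ((integrableOn_Ioo_sub_rpow 0 1 hp).const_mul C) ?_
    filter_upwards [ae_restrict_mem measurableSet_Ioo] with u ⟨hu0, hu1⟩ φ
    have hkφ := hkC (u * sin φ ^ 2)
      ⟨by positivity, mul_le_one₀ hu1.le (by positivity) (sin_sq_le_one φ)⟩
    simp only [F, norm_mul, norm_of_nonneg (rpow_nonneg hu0.le _),
      norm_of_nonneg (rpow_nonneg (sub_nonneg.2 hu1.le) _)]
    calc _ ≤ 1 * (1 - u) ^ (p - 1) * (1 * C) := by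
          gcongr
          · exact rpow_le_one hu0.le hu1.le (by norm_num)
          · exact abs_sin_le_one φ
      _ = C * (1 - u) ^ (p - 1) := by ring
  have middle (u : ℝ) (hu : u ∈ Ioo 0 1) : ∫ φ in Ioo 0 (π / 2), F φ u =
      (1 / 2) * ∫ x in Ioo 0 u, (1 - u) ^ (p - 1) * (u - x) ^ (-(1 / 2) : ℝ) * k x := by
    simp only [F, mul_assoc, integral_const_mul]
    rw [integral_sin_mul_comp_mul_sin_sq hu.1]
    have hu' : u ^ (3 / 2 - 1 : ℝ) * u ^ (-(1 / 2) : ℝ) = 1 := by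
      rw [← rpow_add hu.1]; norm_num
    linear_combination
      (1 / 2 * (1 - u) ^ (p - 1) * ∫ x in Ioo 0 u, (u - x) ^ (-(1 / 2) : ℝ) * k x) * hu'
  calc _ = ∫ φ in Ioo 0 (π / 2), ∫ u in Ioo 0 1, F φ u := by
        simp_rw [inner, integral_const_mul]
        ring
    _ = ∫ u in Ioo 0 1, ∫ φ in Ioo 0 (π / 2), F φ u := swap
    _ = _ := by
        rw [← integral_const_mul]
        exact setIntegral_congr_fun measurableSet_Ioo middle

theorem two_mul_integral_integral_cos_rpow_mul_sin_sq_mul_sin_comp {p : ℝ} (hp : 0 < p)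
    {k : ℝ → ℝ} (hk : Measurable k) {C : ℝ}
    (hkC : ∀ y ∈ Icc (0 : ℝ) 1, ‖k y‖ ≤ C) :
    2 * ∫ φ in (0 : ℝ)..(π / 2), ∫ θ in (0 : ℝ)..(π / 2),
        cos θ ^ (2 * p - 1) * sin θ ^ 2 * sin φ * k (sin θ ^ 2 * sin φ ^ 2) =
      (1 / 2) * eulerBeta (1 / 2) p * ∫ x in (0 : ℝ)..1, k x * (1 - x) ^ (p - 1 / 2) := by
  have hpi : (0 : ℝ) ≤ π / 2 := by positivity
  have hdirichlet := integral_integral_sub_rpow_mul_sub_rpow_mul_eq_eulerBeta_mul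
    (a := 0) (b := 1) (α := 1 / 2) (by norm_num) hp hk hkC
  rw [show (1 / 2 - 1 : ℝ) = -(1 / 2) by norm_num, show 1 / 2 + p - 1 = p - 1 / 2 by ring]
    at hdirichlet
  simp_rw [intervalIntegral.integral_of_le hpi, intervalIntegral.integral_of_le zero_le_one,
    integral_Ioc_eq_integral_Ioo]
  rw [two_mul_integral_integral_cos_rpow_sin_comp_eq hp hk hkC, hdirichlet]
  ring

theorem stmt_4 (p : ℝ) (hp : 0 < p) (z : ℝ) :
    2 * ∫ φ in (0:ℝ)..(Real.pi / 2), ∫ θ in (0:ℝ)..(Real.pi / 2),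
          Real.cos θ ^ (2 * p - 1) * Real.sin θ ^ 2 * Real.sin φ *
            (1 + z ^ 2 * Real.sin θ ^ 2 * Real.sin φ ^ 2) ^ (-(1 / 2) : ℝ) =
      (1 / 2) * eulerBeta (1 / 2) p *
        ∫ x in (0:ℝ)..1, (1 + z ^ 2 * x) ^ (-(1 / 2) : ℝ) * (1 - x) ^ (p - 1 / 2) := by
  have hk_le (y : ℝ) (hy : y ∈ Icc (0 : ℝ) 1) :
      ‖(1 + z ^ 2 * y) ^ (-(1 / 2) : ℝ)‖ ≤ 1 := by
    have hy' : 1 ≤ 1 + z ^ 2 * y := le_add_of_nonneg_right (by have := hy.1; positivity)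
    rw [norm_of_nonneg (rpow_nonneg (by linarith) _)]
    exact rpow_le_one_of_one_le_of_nonpos hy' (by norm_num)
  simpa only [← mul_assoc] using
    two_mul_integral_integral_cos_rpow_mul_sin_sq_mul_sin_comp hp (by fun_prop) hk_le
end

section
/- Define I(z; p) = (1/2) B(1/2, p) ∫_0^1 (1 + z² x)^{−1/2} (1 − x)^{p − 1/2} dx for p > 0 and z real. Then for every p > 0 and every real z, one has z² (1 + p) I(z; p+1) = p (1 + z²) I(z; p) − p B(p, 3/2). -/
/-!
Differentiating `(1 + z² x)^(1/2) (1 - x)^(p + 1/2)` on `[0, 1]` relates the integrals in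
`I(z; p + 1)` and `I(z; p)`, with boundary term `-1`. The Beta prefactors are then matched by the
recurrences of `B`, which come from `B(x, y) = Γ(x) Γ(y) / Γ(x + y)`.
-/

open MeasureTheory Real

/-- `I(z; p) = (1/2) B(1/2, p) ∫ x in 0..1, (1 + z² x)^(-1/2) (1 - x)^(p - 1/2)`. -/
noncomputable def edgeI (z p : ℝ) : ℝ :=
  (1 / 2) * eulerBeta (1 / 2) p *
    ∫ x in (0:ℝ)..1, (1 + z ^ 2 * x) ^ (-(1 / 2) : ℝ) * (1 - x) ^ (p - 1 / 2)

theorem ofReal_eulerBeta (x y : ℝ) : (eulerBeta x y : ℂ) = Complex.betaIntegral x y := by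
  rw [eulerBeta, ← intervalIntegral.integral_ofReal, Complex.betaIntegral]
  refine intervalIntegral.integral_congr fun t ht => ?_
  rw [Set.uIcc_of_le zero_le_one] at ht
  push_cast [Complex.ofReal_cpow ht.1, Complex.ofReal_cpow (sub_nonneg.2 ht.2)]
  rfl

theorem eulerBeta_comm (x y : ℝ) : eulerBeta x y = eulerBeta y x := by
  exact_mod_cast (ofReal_eulerBeta x y).trans
    ((Complex.betaIntegral_symm _ _).trans (ofReal_eulerBeta y x).symm)

theorem eulerBeta_eq_Gamma_mul_Gamma_div {x y : ℝ} (hx : 0 < x) (hy : 0 < y) :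
    eulerBeta x y = Gamma x * Gamma y / Gamma (x + y) := by
  rw [← ProbabilityTheory.beta, ProbabilityTheory.beta_eq_betaIntegralReal x y hx hy,
    ← ofReal_eulerBeta, Complex.ofReal_re]

theorem add_mul_eulerBeta_add_one_right {x y : ℝ} (hx : 0 < x) (hy : 0 < y) :
    (x + y) * eulerBeta x (y + 1) = y * eulerBeta x y := by
  rw [eulerBeta_eq_Gamma_mul_Gamma_div hx hy, eulerBeta_eq_Gamma_mul_Gamma_div hx (by positivity),
    ← add_assoc, Gamma_add_one hy.ne', Gamma_add_one (by positivity : x + y ≠ 0)]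
  have := (Gamma_pos_of_pos (add_pos hx hy)).ne'
  field_simp

theorem mul_eulerBeta_add_one_right {x y : ℝ} (hx : 0 < x) (hy : 0 < y) :
    x * eulerBeta x (y + 1) = y * eulerBeta (x + 1) y := by
  have h := Complex.betaIntegral_recurrence (u := x) (v := y) (by simpa) (by simpa)
  rw [← Complex.ofReal_one, ← Complex.ofReal_add, ← Complex.ofReal_add, ← ofReal_eulerBeta,
    ← ofReal_eulerBeta] at h
  exact_mod_cast h

theorem intervalIntegrable_one_sub_rpow {r : ℝ} (hr : -1 < r) :
    IntervalIntegrable (fun t : ℝ => (1 - t) ^ r) volume 0 1 := by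
  simpa using
    ((intervalIntegral.intervalIntegrable_rpow' (a := 0) (b := 1) hr).comp_sub_left 1).symm

theorem integral_one_add_mul_rpow_mul_one_sub_rpow_recurrence {a s q : ℝ} (ha : -1 < a)
    (hq : 0 < q) :
    q * (1 + a) * ∫ x in (0:ℝ)..1, (1 + a * x) ^ s * (1 - x) ^ (q - 1) =
      a * (s + q + 1) * (∫ x in (0:ℝ)..1, (1 + a * x) ^ s * (1 - x) ^ q) + 1 := by
  have hpos : ∀ x ∈ Set.Icc (0:ℝ) 1, 0 < 1 + a * x := fun x hx => by
    rcases hx.2.lt_or_eq with hx1 | rfl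
    · nlinarith [mul_nonneg hx.1 (by linarith : (0:ℝ) ≤ 1 + a)]
    · linarith
  have hcont (r : ℝ) : ContinuousOn (fun x : ℝ => (1 + a * x) ^ r) (Set.uIcc 0 1) := by
    rw [Set.uIcc_of_le zero_le_one]
    exact ContinuousOn.rpow_const (by fun_prop) fun x hx => Or.inl (hpos x hx).ne'
  set F : ℝ → ℝ := fun x => (1 + a * x) ^ (s + 1) * (1 - x) ^ q
  set f : ℝ → ℝ := fun x => (1 + a * x) ^ s * (1 - x) ^ q
  set g : ℝ → ℝ := fun x => (1 + a * x) ^ s * (1 - x) ^ (q - 1)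
  have hf : IntervalIntegrable f volume 0 1 :=
    (intervalIntegrable_one_sub_rpow (by linarith)).continuousOn_mul (hcont s)
  have hg : IntervalIntegrable g volume 0 1 :=
    (intervalIntegrable_one_sub_rpow (by linarith)).continuousOn_mul (hcont s)
  have hF : ContinuousOn F (Set.Icc 0 1) := by
    refine ((hcont _).mono ?_).mul ?_
    · simp [Set.uIcc_of_le]
    · exact ((continuous_const.sub continuous_id).rpow_const fun _ => Or.inr hq.le).continuousOn
  -- `1 + a x = (1 + a) - a (1 - x)` splits the derivative of `F` into `f` and `g`
  have hF' : ∀ x ∈ Set.Ioo (0:ℝ) 1,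
      HasDerivAt F (a * (s + q + 1) * f x - q * (1 + a) * g x) x := by
    intro x hx
    have hu : 0 < 1 + a * x := hpos x (Set.Ioo_subset_Icc_self hx)
    have hv : 0 < 1 - x := by linarith [hx.2]
    have h₁ : HasDerivAt (fun x => (1 + a * x) ^ (s + 1)) (a * (s + 1) * (1 + a * x) ^ s) x := by
      simpa using
        (((hasDerivAt_id x).const_mul a).const_add 1).rpow_const (p := s + 1) (Or.inl hu.ne')
    have h₂ : HasDerivAt (fun x => (1 - x) ^ q) (-(q * (1 - x) ^ (q - 1))) x := by
      simpa using ((hasDerivAt_id x).const_sub 1).rpow_const (p := q) (Or.inl hv.ne')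
    refine (h₁.mul h₂).congr_deriv ?_
    simp only [f, g]
    have hv' : (1 - x) ^ q = (1 - x) ^ (q - 1) * (1 - x) := by
      rw [← rpow_add_one hv.ne', sub_add_cancel]
    rw [rpow_add_one hu.ne', hv']
    ring
  have hFTC := intervalIntegral.integral_eq_sub_of_hasDerivAt_of_le zero_le_one hF hF'
    ((hf.const_mul _).sub (hg.const_mul _))
  rw [intervalIntegral.integral_sub (hf.const_mul _) (hg.const_mul _),
    intervalIntegral.integral_const_mul, intervalIntegral.integral_const_mul] at hFTC
  simp only [F, mul_one, sub_self, zero_rpow hq.ne', mul_zero, add_zero, one_rpow, sub_zero,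
    zero_sub] at hFTC
  linarith

theorem stmt_5 (p : ℝ) (hp : 0 < p) (z : ℝ) :
    z ^ 2 * (1 + p) * edgeI z (p + 1) =
      p * (1 + z ^ 2) * edgeI z p - p * eulerBeta p (3 / 2) := by
  have hJ := integral_one_add_mul_rpow_mul_one_sub_rpow_recurrence (a := z ^ 2) (s := -(1 / 2))
    (q := p + 1 / 2) (neg_one_lt_zero.trans_le (sq_nonneg z)) (by positivity)
  have hB₁ := add_mul_eulerBeta_add_one_right one_half_pos hp
  have hB₂ := mul_eulerBeta_add_one_right one_half_pos hp
  rw [eulerBeta_comm (1 / 2 + 1)] at hB₂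
  rw [show p + 1 / 2 - 1 = p - 1 / 2 by ring] at hJ
  norm_num at hB₂
  unfold edgeI
  rw [show p + 1 - 1 / 2 = p + 1 / 2 by ring]
  set J := ∫ x in (0:ℝ)..1, (1 + z ^ 2 * x) ^ (-(1 / 2) : ℝ) * (1 - x) ^ (p - 1 / 2)
  linear_combination (-eulerBeta (1 / 2) (p + 1) / 2) * hJ + (1 + z ^ 2) / 2 * J * hB₁ - hB₂
end

section
/- For every real σ > 1, one has −π/2 < (1/√(2σ−1))·(1 − (3σ−1)/(σ(σ+1) + (σ−1))) − arctan(√(2σ−1)/(σ−1)) < 1/√(2σ−1) < 1. (This expresses that the Bessel phase function η_1 satisfies −π/2 < ∂η_1/∂ν(σ−1, σ) < 1.) -/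
open Real

lemma mul_one_sub_sub_arctan_mem_Ioo {a t x : ℝ} (ha : 0 < a) (ht₀ : 0 < t) (ht₁ : t ≤ 1)
    (hx : 0 ≤ x) : a * (1 - t) - arctan x ∈ Set.Ioo (-(π / 2)) a := by
  have hfirst_nonneg : 0 ≤ a * (1 - t) := mul_nonneg ha.le (sub_nonneg.mpr ht₁)
  have hfirst_lt : a * (1 - t) < a := by nlinarith
  have harctan_nonneg : 0 ≤ arctan x := arctan_nonneg.mpr hx
  have harctan_lt : arctan x < π / 2 := arctan_lt_pi_div_two x
  constructor <;> linarith

lemma one_lt_sqrt_two_mul_sub_one {σ : ℝ} (hσ : 1 < σ) : 1 < √(2 * σ - 1) :=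
  (lt_sqrt zero_le_one).mpr (by linarith)

lemma div_mem_Ioc_of_one_le {σ : ℝ} (hσ : 1 ≤ σ) :
    (3 * σ - 1) / (σ * (σ + 1) + (σ - 1)) ∈ Set.Ioc 0 1 := by
  have hden : 0 < σ * (σ + 1) + (σ - 1) := by nlinarith
  exact ⟨div_pos (by linarith) hden, (div_le_one hden).mpr (by nlinarith)⟩

theorem stmt_14 (σ : ℝ) (hσ : 1 < σ) :
    -(Real.pi / 2) <
        (1 / Real.sqrt (2 * σ - 1)) *
            (1 - (3 * σ - 1) / (σ * (σ + 1) + (σ - 1))) -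
          Real.arctan (Real.sqrt (2 * σ - 1) / (σ - 1)) ∧
      (1 / Real.sqrt (2 * σ - 1)) *
            (1 - (3 * σ - 1) / (σ * (σ + 1) + (σ - 1))) -
          Real.arctan (Real.sqrt (2 * σ - 1) / (σ - 1)) <
        1 / Real.sqrt (2 * σ - 1) ∧
      1 / Real.sqrt (2 * σ - 1) < 1 := by
  have hsqrt := one_lt_sqrt_two_mul_sub_one hσ
  have hsqrt_pos : 0 < √(2 * σ - 1) := by linarith
  obtain ⟨ht₀, ht₁⟩ := div_mem_Ioc_of_one_le hσ.le
  have hx : 0 ≤ √(2 * σ - 1) / (σ - 1) := div_nonneg (sqrt_nonneg _) (by linarith)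
  obtain ⟨hlower, hupper⟩ :=
    mul_one_sub_sub_arctan_mem_Ioo (one_div_pos.mpr hsqrt_pos) ht₀ ht₁ hx
  exact ⟨hlower, hupper, (div_lt_one hsqrt_pos).mpr hsqrt⟩
end

section
/- Let L, R > 0. For every real σ > 2R/L and every z with 0 ≤ z ≤ 1/√2, one has (1 − z²)^{−3/2} · ( L/R − σ^{−1}((2 + z² − 2z⁴)/(2 − z²)² − L/(2R)) ) > (15/32)(L/R). (This expresses that the phase function η_2 satisfies ∂²η_2/∂ν²(zσ, σ) < −σ^{−1}(15/32)(L/R), i.e. η_2(·, σ) is strongly concave on [0, σ/√2].) -/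
/-!
Put `t = z²` and `q = L/R`. The hypotheses give `t ≤ 1/2` and `0 < σ⁻¹ < q/2`. On `[0, 1/2]` the
rational function `(2 + t - 2t²)/(2 - t)²` takes values in `[0, 8/9]` (its maximum is at `t = 1/2`),
so the bracket is at least `q (1 - 4/9) = 5q/9`, and the factor `(1 - t)^(-3/2)` is at least `1`.
Since `5/9 > 15/32`, the claim follows.
-/

open Real

lemma sq_le_half_of_le_inv_sqrt_two {z : ℝ} (hz0 : 0 ≤ z) (hz : z ≤ 1 / √2) : z ^ 2 ≤ 1 / 2 := by
  calc z ^ 2 ≤ (1 / √2) ^ 2 := pow_le_pow_left₀ hz0 hz 2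
    _ = 1 / 2 := by rw [div_pow, one_pow, sq_sqrt zero_le_two]

lemma div_sq_two_sub_nonneg {t : ℝ} (ht0 : 0 ≤ t) (ht : t ≤ 1 / 2) :
    0 ≤ (2 + t - 2 * t ^ 2) / (2 - t) ^ 2 :=
  div_nonneg (by nlinarith) (sq_nonneg _)

lemma div_sq_two_sub_le {t : ℝ} (ht : t ≤ 1 / 2) : (2 + t - 2 * t ^ 2) / (2 - t) ^ 2 ≤ 8 / 9 := by
  rw [div_le_iff₀ (by nlinarith)]
  -- `8 (2 - t)² - 9 (2 + t - 2t²) = 26 (1/2 - t) (14/13 - t)`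
  nlinarith [mul_nonneg (sub_nonneg.2 ht) (by linarith : (0 : ℝ) ≤ 14 / 13 - t)]

lemma mul_one_sub_half_le {q s c : ℝ} (hs0 : 0 ≤ s) (hs : s ≤ q / 2) (hc : 0 ≤ c) :
    q * (1 - c / 2) ≤ q - s * (c - q / 2) := by
  nlinarith [mul_le_mul_of_nonneg_right hs hc]

lemma inv_lt_of_div_lt {a b σ : ℝ} (ha : 0 < a) (hb : 0 < b) (hσ : a / b < σ) : σ⁻¹ < b / a := by
  rw [← inv_div]
  exact inv_strictAnti₀ (div_pos ha hb) hσ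

lemma one_le_one_sub_rpow_of_nonpos {t p : ℝ} (ht0 : 0 ≤ t) (ht1 : t < 1) (hp : p ≤ 0) :
    1 ≤ (1 - t) ^ p :=
  one_le_rpow_of_pos_of_le_one_of_nonpos (by linarith) (by linarith) hp

theorem stmt_15 (L R : ℝ) (hL : 0 < L) (hR : 0 < R) (σ : ℝ) (hσ : 2 * R / L < σ)
    (z : ℝ) (hz0 : 0 ≤ z) (hz1 : z ≤ 1 / Real.sqrt 2) :
    (1 - z ^ 2) ^ (-(3 : ℝ) / 2) *
        (L / R - σ⁻¹ * ((2 + z ^ 2 - 2 * z ^ 4) / (2 - z ^ 2) ^ 2 - L / (2 * R))) >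
      (15 / 32) * (L / R) := by
  have hq : 0 < L / R := div_pos hL hR
  have ht := sq_le_half_of_le_inv_sqrt_two hz0 hz1
  have hz4 : z ^ 4 = (z ^ 2) ^ 2 := by ring
  have hσ0 : 0 < σ := (div_pos (by positivity) hL).trans hσ
  have hs : σ⁻¹ ≤ L / R / 2 := by
    rw [← div_mul_eq_div_div_swap]
    exact (inv_lt_of_div_lt (by positivity) hL hσ).le
  rw [hz4, div_mul_eq_div_div_swap]
  set c := (2 + z ^ 2 - 2 * (z ^ 2) ^ 2) / (2 - z ^ 2) ^ 2
  have hc0 : 0 ≤ c := div_sq_two_sub_nonneg (sq_nonneg z) ht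
  have hc : c ≤ 8 / 9 := div_sq_two_sub_le ht
  have hbracket := mul_one_sub_half_le (inv_pos.2 hσ0).le hs hc0
  calc 15 / 32 * (L / R) < L / R * (1 - c / 2) := by nlinarith
    _ ≤ L / R - σ⁻¹ * (c - L / R / 2) := hbracket
    _ ≤ _ := le_mul_of_one_le_left (by nlinarith)
          (one_le_one_sub_rpow_of_nonpos (sq_nonneg z) (by linarith) (by norm_num))
end

section
/- Let k be an integer, σ a real number with k < σ, and let f : [k, σ] → ℝ be continuous and strictly decreasing, with inverse g : [f(σ), f(k)] → [k, σ]. Then Σ_{j ∈ ℤ, k < j ≤ σ} ⌊f(j)⌋ = Σ_{m ∈ ℤ, f(σ) < m ≤ f(k)} ⌊g(m)⌋ + ⌊f(σ)⌋(⌊σ⌋ − k) − k(⌊f(k)⌋ − ⌊f(σ)⌋). -/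
open Finset

namespace Int

lemma sum_Ioc_ite_le {a b c : ℤ} (hab : a ≤ b) (hbc : b ≤ c) :
    ∑ m ∈ Ioc a c, (if m ≤ b then (1 : ℤ) else 0) = b - a := by
  have hfilter : {m ∈ Ioc a c | m ≤ b} = Ioc a b := by
    ext m
    simp only [mem_filter, mem_Ioc]
    omega
  rw [← sum_filter, hfilter, sum_const, card_Ioc, nsmul_eq_mul, mul_one]
  omega

/-- Both sides count the lattice points `(j, m)` of the box `(c, d] × (a, b]` with `m ≤ F j`,
by columns on the left and by rows on the right. -/
theorem sum_Ioc_sub_eq_sum_Ioc_sub {a b c d : ℤ} {F G : ℤ → ℤ}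
    (hF : ∀ j ∈ Ioc c d, F j ∈ Icc a b) (hG : ∀ m ∈ Ioc a b, G m ∈ Icc c d)
    (hFG : ∀ j ∈ Ioc c d, ∀ m ∈ Ioc a b, m ≤ F j ↔ j ≤ G m) :
    ∑ j ∈ Ioc c d, (F j - a) = ∑ m ∈ Ioc a b, (G m - c) := by
  have hcol : ∀ j ∈ Ioc c d, F j - a = ∑ m ∈ Ioc a b, if m ≤ F j then (1 : ℤ) else 0 :=
    fun j hj ↦ (sum_Ioc_ite_le (mem_Icc.1 (hF j hj)).1 (mem_Icc.1 (hF j hj)).2).symm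
  have hrow : ∀ m ∈ Ioc a b, G m - c = ∑ j ∈ Ioc c d, if j ≤ G m then (1 : ℤ) else 0 :=
    fun m hm ↦ (sum_Ioc_ite_le (mem_Icc.1 (hG m hm)).1 (mem_Icc.1 (hG m hm)).2).symm
  rw [sum_congr rfl hcol, sum_congr rfl hrow, sum_comm]
  exact sum_congr rfl fun m hm ↦ sum_congr rfl fun j hj ↦ if_congr (hFG j hj m hm) rfl rfl

theorem sum_Ioc_eq_sum_Ioc_add {a b c d : ℤ} (hab : a ≤ b) (hcd : c ≤ d) {F G : ℤ → ℤ}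
    (hF : ∀ j ∈ Ioc c d, F j ∈ Icc a b) (hG : ∀ m ∈ Ioc a b, G m ∈ Icc c d)
    (hFG : ∀ j ∈ Ioc c d, ∀ m ∈ Ioc a b, m ≤ F j ↔ j ≤ G m) :
    ∑ j ∈ Ioc c d, F j = ∑ m ∈ Ioc a b, G m + a * (d - c) - c * (b - a) := by
  have h := sum_Ioc_sub_eq_sum_Ioc_sub hF hG hFG
  rw [sum_sub_distrib, sum_sub_distrib, sum_const, sum_const, card_Ioc, card_Ioc,
    nsmul_eq_mul, nsmul_eq_mul, toNat_sub_of_le hab, toNat_sub_of_le hcd] at h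
  linarith

variable {α : Type*} [Ring α] [LinearOrder α] [FloorRing α]

lemma mem_Ioc_floor_iff {a b : α} {m : ℤ} : m ∈ Ioc ⌊a⌋ ⌊b⌋ ↔ (m : α) ∈ Set.Ioc a b := by
  rw [mem_Ioc, Set.mem_Ioc, floor_lt, le_floor]

lemma floor_mem_Icc_floor {a b x : α} (hx : x ∈ Set.Icc a b) : ⌊x⌋ ∈ Icc ⌊a⌋ ⌊b⌋ :=
  mem_Icc.2 ⟨floor_le_floor hx.1, floor_le_floor hx.2⟩

end Int

lemma StrictAntiOn.le_floor_iff_le_floor {α β : Type*} [Ring α] [LinearOrder α] [FloorRing α]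
    [Ring β] [LinearOrder β] [FloorRing β] {s : Set α} {f : α → β} {g : β → α}
    (hf : StrictAntiOn f s) {j m : ℤ} (hj : (j : α) ∈ s) (hgm : g m ∈ s) (hfg : f (g m) = m) :
    m ≤ ⌊f j⌋ ↔ j ≤ ⌊g m⌋ := by
  rw [Int.le_floor, Int.le_floor, ← hf.le_iff_ge hgm hj, hfg]

theorem stmt_17_general (k : ℤ) (σ : ℝ) (hkσ : (k : ℝ) < σ) (f g : ℝ → ℝ)
    (hf_anti : StrictAntiOn f (Set.Icc (k : ℝ) σ))
    (hg_right : ∀ y ∈ Set.Icc (f σ) (f (k : ℝ)),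
      g y ∈ Set.Icc (k : ℝ) σ ∧ f (g y) = y) :
    ∑ j ∈ Finset.Ioc k ⌊σ⌋, ⌊f (j : ℝ)⌋ =
      (∑ m ∈ Finset.Ioc ⌊f σ⌋ ⌊f (k : ℝ)⌋, ⌊g (m : ℝ)⌋) +
        ⌊f σ⌋ * (⌊σ⌋ - k) - k * (⌊f (k : ℝ)⌋ - ⌊f σ⌋) := by
  have hkI : (k : ℝ) ∈ Set.Icc (k : ℝ) σ := ⟨le_rfl, hkσ.le⟩
  have hσI : σ ∈ Set.Icc (k : ℝ) σ := ⟨hkσ.le, le_rfl⟩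
  have hj_mem : ∀ j ∈ Ioc k ⌊σ⌋, (j : ℝ) ∈ Set.Icc (k : ℝ) σ := fun j hj ↦
    Set.Ioc_subset_Icc_self (Int.mem_Ioc_floor_iff.1 (by rwa [Int.floor_intCast]))
  have hm_mem : ∀ m ∈ Ioc ⌊f σ⌋ ⌊f k⌋, (m : ℝ) ∈ Set.Icc (f σ) (f k) := fun m hm ↦
    Set.Ioc_subset_Icc_self (Int.mem_Ioc_floor_iff.1 hm)
  refine Int.sum_Ioc_eq_sum_Ioc_add (Int.floor_le_floor (hf_anti hkI hσI hkσ).le)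
    (Int.le_floor.2 hkσ.le) (fun j hj ↦ ?_) (fun m hm ↦ ?_) (fun j hj m hm ↦ ?_)
  · exact Int.floor_mem_Icc_floor (hf_anti.antitoneOn.mapsTo_Icc (hj_mem j hj))
  · simpa only [Int.floor_intCast] using Int.floor_mem_Icc_floor (hg_right m (hm_mem m hm)).1
  · obtain ⟨hgm, hfg⟩ := hg_right m (hm_mem m hm)
    exact hf_anti.le_floor_iff_le_floor (hj_mem j hj) hgm hfg

theorem stmt_17 (k : ℤ) (σ : ℝ) (hkσ : (k : ℝ) < σ) (f g : ℝ → ℝ)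
    (hf_cont : ContinuousOn f (Set.Icc (k : ℝ) σ))
    (hf_anti : StrictAntiOn f (Set.Icc (k : ℝ) σ))
    (hg_left : ∀ x ∈ Set.Icc (k : ℝ) σ, g (f x) = x)
    (hg_right : ∀ y ∈ Set.Icc (f σ) (f (k : ℝ)),
      g y ∈ Set.Icc (k : ℝ) σ ∧ f (g y) = y) :
    ∑ j ∈ Finset.Ioc k ⌊σ⌋, ⌊f (j : ℝ)⌋ =
      (∑ m ∈ Finset.Ioc ⌊f σ⌋ ⌊f (k : ℝ)⌋, ⌊g (m : ℝ)⌋) +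
        ⌊f σ⌋ * (⌊σ⌋ - k) - k * (⌊f (k : ℝ)⌋ - ⌊f σ⌋) :=
  stmt_17_general k σ hkσ f g hf_anti hg_right
end
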